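/- arXiv:2402.10703 — 4 statements merged into one kernel-verified Lean document; each statement's English description precedes it below -/
import Mathlib

section
/- Fix s ∈ (0,1) and a natural number m. Then lim_{k→∞} sup_{w ∈ 𝔻_s} k^m · |w|^{k−m} · |w − 1|^{4m+2} = 0, where the limit is over integers k > m. -/
/-!
On `𝔻_s` one has `‖w‖ ≤ 1` and `(1 - s) ‖w - 1‖² ≤ 2 s (1 - ‖w‖)`: near the tangency point the
disc approaches `1` no faster than a parabola. Hence with `p = 2m + 1` and `n = k - m`,
`‖w‖ⁿ ‖w - 1‖^(2p) ≲ ‖w‖ⁿ (1 - ‖w‖)^p ≤ p! / nᵖ` (use `Aⁿ ≤ e^(-t)` and `tᵖ ≤ p! eᵗ` for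
`t = n (1 - A)`), and the factor `kᵐ ≲ nᵐ` leaves `O(1/n)`.
-/

open Real Filter Topology Nat

lemma pow_mul_one_sub_pow_mul_pow_le {A : ℝ} (hA0 : 0 ≤ A) (hA1 : A ≤ 1) (n p : ℕ) :
    A ^ n * (1 - A) ^ p * n ^ p ≤ p ! := by
  set t : ℝ := n * (1 - A) with ht_def
  have ht : 0 ≤ t := mul_nonneg n.cast_nonneg (sub_nonneg.2 hA1)
  have hAn : A ^ n ≤ exp (-t) :=
    calc A ^ n ≤ exp (A - 1) ^ n := by
          gcongr
          linarith [add_one_le_exp (A - 1)]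
      _ = exp (-t) := by rw [← exp_nat_mul, ht_def]; ring_nf
  have htp : t ^ p ≤ p ! * exp t :=
    (div_le_iff₀' (by positivity)).1 (pow_div_factorial_le_exp t ht p)
  calc A ^ n * (1 - A) ^ p * n ^ p = A ^ n * t ^ p := by rw [ht_def, mul_pow]; ring
    _ ≤ exp (-t) * (p ! * exp t) := by gcongr
    _ = p ! := by rw [exp_neg]; field_simp

section Disc

variable {s : ℝ} {w : ℂ}

lemma norm_le_one_of_norm_sub_one_sub_le (hs : s ≤ 1) (hw : ‖w - (1 - s)‖ ≤ s) : ‖w‖ ≤ 1 :=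
  calc ‖w‖ ≤ ‖(1 - s : ℂ)‖ + ‖w - (1 - s)‖ := norm_le_norm_add_norm_sub' _ _
    _ ≤ (1 - s) + s := by
        gcongr
        rw [← Complex.ofReal_one, ← Complex.ofReal_sub, Complex.norm_real, norm_of_nonneg]
        linarith
    _ = 1 := by ring

/-- Both sides differ by `s² - ‖w - (1 - s)‖²`. -/
lemma one_sub_mul_norm_sub_one_sq_le (hw : ‖w - (1 - s)‖ ≤ s) :
    (1 - s) * ‖w - 1‖ ^ 2 ≤ s * (1 - ‖w‖ ^ 2) := by
  have hsq : ‖w - (1 - s)‖ ^ 2 ≤ s ^ 2 := pow_le_pow_left₀ (norm_nonneg _) hw 2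
  simp only [Complex.sq_norm, Complex.normSq_apply, Complex.sub_re, Complex.sub_im,
    Complex.one_re, Complex.one_im, Complex.ofReal_re, Complex.ofReal_im] at hsq ⊢
  linarith

lemma norm_pow_mul_norm_sub_one_pow_mul_le (hs : s ≤ 1) (hw : ‖w - (1 - s)‖ ≤ s) (n p : ℕ) :
    ‖w‖ ^ n * ‖w - 1‖ ^ (2 * p) * ((1 - s) ^ p * n ^ p) ≤ (2 * s) ^ p * p ! := by
  have hs0 : 0 ≤ s := (norm_nonneg _).trans hw
  have hw1 := norm_le_one_of_norm_sub_one_sub_le hs hw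
  have hparabola : (1 - s) * ‖w - 1‖ ^ 2 ≤ 2 * s * (1 - ‖w‖) :=
    calc (1 - s) * ‖w - 1‖ ^ 2 ≤ s * (1 - ‖w‖ ^ 2) := one_sub_mul_norm_sub_one_sq_le hw
      _ = s * (1 + ‖w‖) * (1 - ‖w‖) := by ring
      _ ≤ s * 2 * (1 - ‖w‖) := by gcongr; linarith
      _ = 2 * s * (1 - ‖w‖) := by ring
  calc ‖w‖ ^ n * ‖w - 1‖ ^ (2 * p) * ((1 - s) ^ p * n ^ p)
      = ‖w‖ ^ n * ((1 - s) * ‖w - 1‖ ^ 2) ^ p * n ^ p := by rw [mul_pow, pow_mul]; ring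
    _ ≤ ‖w‖ ^ n * (2 * s * (1 - ‖w‖)) ^ p * n ^ p := by gcongr
    _ = (2 * s) ^ p * (‖w‖ ^ n * (1 - ‖w‖) ^ p * n ^ p) := by rw [mul_pow]; ring
    _ ≤ (2 * s) ^ p * p ! := by
        gcongr
        exact pow_mul_one_sub_pow_mul_pow_le (norm_nonneg w) hw1 n p

lemma natCast_pow_mul_norm_pow_mul_norm_sub_one_pow_le (hs : s < 1) (hw : ‖w - (1 - s)‖ ≤ s)
    {m k : ℕ} (hk : 2 * m + 1 ≤ k) :
    (k : ℝ) ^ m * ‖w‖ ^ (k - m) * ‖w - 1‖ ^ (4 * m + 2) ≤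
      2 ^ m * (2 * s) ^ (2 * m + 1) * (2 * m + 1)! / ((1 - s) ^ (2 * m + 1) * (k - m : ℕ)) := by
  set n := k - m
  have hn : (1 : ℝ) ≤ n := by exact_mod_cast (by omega : 1 ≤ n)
  have hkn : (k : ℝ) ≤ 2 * n := by exact_mod_cast (by omega : k ≤ 2 * n)
  rw [le_div_iff₀ (by have := sub_pos.2 hs; positivity), show 4 * m + 2 = 2 * (2 * m + 1) by ring]
  calc (k : ℝ) ^ m * ‖w‖ ^ n * ‖w - 1‖ ^ (2 * (2 * m + 1)) * ((1 - s) ^ (2 * m + 1) * n)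
      ≤ (2 * n) ^ m * ‖w‖ ^ n * ‖w - 1‖ ^ (2 * (2 * m + 1)) * ((1 - s) ^ (2 * m + 1) * n) := by
        gcongr
    _ = 2 ^ m * (‖w‖ ^ n * ‖w - 1‖ ^ (2 * (2 * m + 1)) * ((1 - s) ^ (2 * m + 1) * n ^ (m + 1))) := by
        ring
    _ ≤ 2 ^ m * (‖w‖ ^ n * ‖w - 1‖ ^ (2 * (2 * m + 1)) * ((1 - s) ^ (2 * m + 1) * n ^ (2 * m + 1))) := by
        gcongr
        omega
    _ ≤ 2 ^ m * ((2 * s) ^ (2 * m + 1) * (2 * m + 1)!) := by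
        gcongr 2 ^ m * ?_
        exact norm_pow_mul_norm_sub_one_pow_mul_le hs.le hw n (2 * m + 1)
    _ = 2 ^ m * (2 * s) ^ (2 * m + 1) * (2 * m + 1)! := by ring

end Disc

/-- For fixed `s ∈ (0,1)` and `m ∈ ℕ`,
`sup_{w ∈ 𝔻_s} k^m * |w|^(k-m) * |w-1|^(4m+2) → 0` as `k → ∞`, where
`𝔻_s = {w : |w - (1-s)| ≤ s}` is the closed disc of radius `s` centred at `1 - s`. -/
theorem stmt3 (s : ℝ) (hs : s ∈ Set.Ioo (0 : ℝ) 1) (m : ℕ) :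
    Filter.Tendsto
      (fun k : ℕ => sSup ((fun w : ℂ =>
          (k : ℝ) ^ m * ‖w‖ ^ (k - m) * ‖w - 1‖ ^ (4 * m + 2)) ''
        {w : ℂ | ‖w - (1 - (s : ℂ))‖ ≤ s}))
      Filter.atTop (nhds 0) := by
  obtain ⟨hs0, hs1⟩ := hs
  set C : ℝ := 2 ^ m * (2 * s) ^ (2 * m + 1) * (2 * m + 1)! / (1 - s) ^ (2 * m + 1)
  have hlim : Tendsto (fun k : ℕ => C / (k - m : ℕ)) atTop (𝓝 0) :=
    (tendsto_const_div_atTop_nhds_zero_nat C).comp (tendsto_sub_atTop_nat m)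
  refine tendsto_of_tendsto_of_tendsto_of_le_of_le' tendsto_const_nhds hlim
    (Eventually.of_forall fun k => Real.sSup_nonneg ?_) ?_
  · rintro _ ⟨w, -, rfl⟩
    positivity
  · filter_upwards [eventually_ge_atTop (2 * m + 1)] with k hk
    refine Real.sSup_le ?_ (by positivity)
    rintro _ ⟨w, hw, rfl⟩
    rw [div_div]
    exact natCast_pow_mul_norm_pow_mul_norm_sub_one_pow_le hs1 hw hk
end

section
/- Fix s ∈ (0,1). There exists a constant C > 0 (depending only on s) such that for every integer k ≥ 4 and every w ∈ 𝔻_s \ V_{s,k}, one has |w| ≤ (1 + C·k^{−1/2})^{−1/2}. -/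
/-! Write `w = (1 - s) + z` with `r = ‖z‖ ≤ s`, `θ = arg z` and `ε = k^{-1/2}`. If
`r ≤ s - min ε (s/2)`, then `‖w‖ ≤ 1 - min ε (s/2)` by the triangle inequality. Otherwise `w ∉ V`
forces `|θ| > k^{-1/4}`, so `1 - cos θ ≥ θ²/5 ≥ ε/5`, and the law of cosines
`‖w‖² = (1 - s + r)² - 2(1 - s) r (1 - cos θ)` together with `r > s/2` gives
`‖w‖² ≤ 1 - s(1 - s)ε/5`. In both cases `‖w‖² ≤ 1 - Cε ≤ (1 + Cε)⁻¹` with `C = s(1 - s)/5`. -/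

open Complex

/-- `V_{s,k} = annularSector (1 - s) (s - k^{-1/2}) s k^{-1/4}`. -/
def annularSector (c ρ R α : ℝ) : Set ℂ :=
  {w | ∃ r θ : ℝ, ρ ≤ r ∧ r ≤ R ∧ -α ≤ θ ∧ θ ≤ α ∧
    w = (c : ℂ) + (r : ℂ) * Complex.exp ((θ : ℂ) * Complex.I)}

theorem ofReal_add_mem_annularSector {c ρ R α : ℝ} {z : ℂ} (hρ : ρ ≤ ‖z‖) (hR : ‖z‖ ≤ R)
    (hα : |arg z| ≤ α) : (c : ℂ) + z ∈ annularSector c ρ R α :=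
  ⟨‖z‖, arg z, hρ, hR, (abs_le.mp hα).1, (abs_le.mp hα).2, by rw [norm_mul_exp_arg_mul_I]⟩

theorem Real.cos_le_one_sub_sq_div_five {θ : ℝ} (hθ : |θ| ≤ Real.pi) :
    Real.cos θ ≤ 1 - θ ^ 2 / 5 := by
  have hπ : Real.pi ^ 2 < 10 := by nlinarith [Real.pi_lt_d2, Real.pi_pos]
  have : θ ^ 2 / 5 ≤ 2 / Real.pi ^ 2 * θ ^ 2 := by
    rw [div_mul_eq_mul_div, le_div_iff₀ (by positivity)]
    nlinarith [sq_nonneg θ]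
  linarith [Real.cos_le_one_sub_mul_cos_sq hθ]

theorem Complex.sq_norm_ofReal_add (a : ℝ) (z : ℂ) :
    ‖(a : ℂ) + z‖ ^ 2 = a ^ 2 + ‖z‖ ^ 2 + 2 * a * z.re := by
  simp only [Complex.sq_norm, normSq_apply, add_re, add_im, ofReal_re, ofReal_im]
  ring

theorem Complex.sq_norm_ofReal_add_le {a c : ℝ} (ha : 0 ≤ a) {z : ℂ}
    (hc : Real.cos (arg z) ≤ 1 - c) :
    ‖(a : ℂ) + z‖ ^ 2 ≤ (a + ‖z‖) ^ 2 - 2 * a * ‖z‖ * c := by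
  have : ‖z‖ * Real.cos (arg z) ≤ ‖z‖ * (1 - c) := mul_le_mul_of_nonneg_left hc (norm_nonneg z)
  rw [sq_norm_ofReal_add, ← norm_mul_cos_arg]
  nlinarith

theorem Real.le_one_add_rpow_neg_half_of_sq_le {x c : ℝ} (hc : 0 ≤ c) (h : x ^ 2 ≤ 1 - c) :
    x ≤ (1 + c) ^ (-(1 / 2) : ℝ) := by
  have hc1 : 0 < 1 + c := by linarith
  have : x ^ 2 ≤ (1 + c)⁻¹ := by
    rw [← one_div, le_div_iff₀ hc1]
    nlinarith
  calc x ≤ √(x ^ 2) := (le_abs_self x).trans_eq (Real.sqrt_sq_eq_abs x).symm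
    _ ≤ √((1 + c)⁻¹) := Real.sqrt_le_sqrt this
    _ = (1 + c) ^ (-(1 / 2) : ℝ) := by
      rw [Real.sqrt_eq_rpow, Real.inv_rpow hc1.le, Real.rpow_neg hc1.le]

theorem sq_norm_le_of_notMem_annularSector {s ε δ : ℝ} (hs : s ∈ Set.Ioo (0 : ℝ) 1)
    (hε0 : 0 ≤ ε) (hε1 : ε ≤ 1) (hδ0 : 0 ≤ δ) (hεδ : ε ≤ δ ^ 2) {w : ℂ}
    (hw : ‖w - (1 - (s : ℂ))‖ ≤ s) (hV : w ∉ annularSector (1 - s) (s - ε) s δ) :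
    ‖w‖ ^ 2 ≤ 1 - s * (1 - s) / 5 * ε := by
  obtain ⟨hs0, hs1⟩ := hs
  set z := w - (1 - (s : ℂ))
  have hwz : w = ((1 - s : ℝ) : ℂ) + z := by push_cast; ring
  by_cases hr : ‖z‖ ≤ s - min ε (s / 2)
  · have hwt : ‖w‖ ≤ 1 - min ε (s / 2) := by
      calc ‖w‖ ≤ ‖((1 - s : ℝ) : ℂ)‖ + ‖z‖ := hwz ▸ norm_add_le _ _
        _ ≤ 1 - min ε (s / 2) := by
          rw [Complex.norm_real, Real.norm_of_nonneg (by linarith)]; linarith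
    have hmin : s * (1 - s) / 5 * ε ≤ min ε (s / 2) := by
      have hC0 : 0 ≤ s * (1 - s) / 5 := by nlinarith
      have hC1 : s * (1 - s) / 5 ≤ 1 / 5 := by nlinarith
      exact le_min (mul_le_of_le_one_left hε0 (by linarith))
        ((mul_le_of_le_one_right hC0 hε1).trans (by nlinarith))
    have : ‖w‖ ^ 2 ≤ 1 - min ε (s / 2) := by
      nlinarith [norm_nonneg w, min_le_left ε (s / 2), le_min hε0 (by linarith : 0 ≤ s / 2)]
    linarith
  · rw [not_le] at hr
    have hrε : s - ε < ‖z‖ := by linarith [min_le_left ε (s / 2)]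
    have hrs : s / 2 < ‖z‖ := by linarith [min_le_right ε (s / 2)]
    have hθ : δ < |arg z| := by
      by_contra! hθ
      exact hV (hwz ▸ ofReal_add_mem_annularSector hrε.le hw hθ)
    have hcos : Real.cos (arg z) ≤ 1 - ε / 5 := by
      have : ε ≤ arg z ^ 2 := by nlinarith [sq_abs (arg z)]
      linarith [Real.cos_le_one_sub_sq_div_five (abs_arg_le_pi z)]
    have := sq_norm_ofReal_add_le (by linarith : 0 ≤ 1 - s) hcos
    rw [← hwz] at this
    have hsum : (1 - s + ‖z‖) ^ 2 ≤ 1 := pow_le_one₀ (by linarith [norm_nonneg z]) (by linarith)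
    have hlow : (1 - s) * (s / 2) * ε ≤ (1 - s) * ‖z‖ * ε := by gcongr
    linarith

/-- For `s ∈ (0,1)` there is `C > 0` (depending only on `s`) such that for every `k ≥ 4`
and every `w ∈ 𝔻_s \ V_{s,k}`, `|w| ≤ (1 + C·k^{-1/2})^{-1/2}`. Here
`𝔻_s = {w : |w - (1-s)| ≤ s}` and `V_{s,k}` is the set of `w = (1-s) + r·e^{iθ}` with
`s - k^{-1/2} ≤ r ≤ s`, `|θ| ≤ k^{-1/4}`. -/
theorem stmt5 (s : ℝ) (hs : s ∈ Set.Ioo (0 : ℝ) 1) :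
    ∃ C : ℝ, 0 < C ∧ ∀ k : ℕ, 4 ≤ k → ∀ w : ℂ,
      ‖w - (1 - (s : ℂ))‖ ≤ s →
      ¬ (∃ r θ : ℝ, s - (k : ℝ) ^ (-(1/2) : ℝ) ≤ r ∧ r ≤ s ∧
        -((k : ℝ) ^ (-(1/4) : ℝ)) ≤ θ ∧ θ ≤ (k : ℝ) ^ (-(1/4) : ℝ) ∧
        w = ((1 - s : ℝ) : ℂ) + (r : ℂ) * Complex.exp ((θ : ℂ) * Complex.I)) →
      ‖w‖ ≤ (1 + C * (k : ℝ) ^ (-(1/2) : ℝ)) ^ (-(1/2) : ℝ) := by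
  have hC : 0 < s * (1 - s) / 5 := by nlinarith [hs.1, hs.2]
  refine ⟨s * (1 - s) / 5, hC, fun k hk w hw hV => ?_⟩
  have hk1 : (1 : ℝ) ≤ k := by exact_mod_cast (by omega : 1 ≤ k)
  have hsq : ((k : ℝ) ^ (-(1/4) : ℝ)) ^ 2 = (k : ℝ) ^ (-(1/2) : ℝ) := by
    rw [← Real.rpow_natCast, ← Real.rpow_mul (by positivity)]
    norm_num
  refine Real.le_one_add_rpow_neg_half_of_sq_le (by positivity) ?_
  exact sq_norm_le_of_notMem_annularSector hs (by positivity)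
    (Real.rpow_le_one_of_one_le_of_nonpos hk1 (by norm_num)) (by positivity) hsq.ge hw hV
end

section
/- Fix a real number q > 1 and δ ∈ (0, 1/2]. Then γ(iδ) is the real number 1 − (q^{1/2−δ} + q^{1/2+δ})/(q+1), which is ≥ 0 (and = 0 exactly when δ = 1/2). For every z ∈ ℂ with |Im z| ≤ δ one has |γ(z)| ≥ γ(iδ), and for every real α with −τ/2 < α ≤ τ/2 and α ≠ 0 one has the strict inequality |γ(α + iδ)| > γ(iδ). -/
/-- `q^w = exp(w log q)`. -/
noncomputable def qpow (q : ℝ) (w : ℂ) : ℂ := Complex.exp (w * (Real.log q : ℂ))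

/-- The symbol of the Laplacian: `γ(z) = 1 - (q^{1/2+iz} + q^{1/2-iz})/(q+1)`. -/
noncomputable def gam (q : ℝ) (z : ℂ) : ℂ :=
  1 - (qpow q (1/2 + Complex.I * z) + qpow q (1/2 - Complex.I * z)) / ((q : ℂ) + 1)

/-- `τ = 2π / log q`. -/
noncomputable def tauq (q : ℝ) : ℝ := 2 * Real.pi / Real.log q

/-!
Writing `L = log q`, one has `γ(z) = 1 - 2√q cos(zL)/(q+1)`, hence
`Re γ(x+iy) = 1 - 2√q cos(xL) cosh(yL)/(q+1)`, while `q^{1/2-t} + q^{1/2+t} = 2√q cosh(tL)`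
grows with `|t|` and equals `q+1` at `t = 1/2`. So `|γ(z)| ≥ Re γ(z) ≥ γ(iδ)` on the strip, and the
inequality is strict on the line `Im z = δ` as soon as `cos(xL) < 1`, i.e. for `0 < |xL| ≤ π`.
-/

open Real

lemma sqrt_eq_exp_half_log {q : ℝ} (hq : 0 < q) : √q = exp (log q / 2) := by
  rw [exp_half, exp_log hq]

lemma rpow_half_sub_add_rpow_half_add {q : ℝ} (hq : 0 < q) (t : ℝ) :
    q ^ ((1:ℝ)/2 - t) + q ^ ((1:ℝ)/2 + t) = 2 * √q * cosh (t * log q) := by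
  rw [rpow_def_of_pos hq, rpow_def_of_pos hq, sqrt_eq_exp_half_log hq, cosh_eq,
    show log q * (1/2 - t) = log q / 2 + -(t * log q) by ring,
    show log q * (1/2 + t) = log q / 2 + t * log q by ring, exp_add, exp_add]
  ring

lemma gam_eq_one_sub_cos {q : ℝ} (hq : 0 < q) (z : ℂ) :
    gam q z = 1 - 2 * √q * Complex.cos (z * log q) / (q + 1) := by
  rw [gam, qpow, qpow, mul_right_comm 2, Complex.two_cos, sqrt_eq_exp_half_log hq,
    Complex.ofReal_exp]
  simp only [add_mul, ← Complex.exp_add]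
  push_cast
  ring_nf

lemma Complex.re_cos (w : ℂ) : (cos w).re = Real.cos w.re * Real.cosh w.im := by
  rw [Complex.cos_eq]
  simp [Complex.cos_ofReal_re, Complex.cosh_ofReal_re]

lemma re_gam {q : ℝ} (hq : 0 < q) (z : ℂ) :
    (gam q z).re = 1 - 2 * √q * (cos (z.re * log q) * cosh (z.im * log q)) / (q + 1) := by
  rw [gam_eq_one_sub_cos hq, show (2 : ℂ) * √q * Complex.cos (z * log q) / (q + 1)
      = ((2 * √q / (q + 1) : ℝ) : ℂ) * Complex.cos (z * log q) by push_cast; ring,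
    Complex.sub_re, Complex.one_re, Complex.re_ofReal_mul, Complex.re_cos, Complex.re_mul_ofReal,
    Complex.im_mul_ofReal]
  ring

lemma gam_I_mul_ofReal {q : ℝ} (hq : 0 < q) (t : ℝ) :
    gam q (Complex.I * t) = ((1 - (q ^ ((1:ℝ)/2 - t) + q ^ ((1:ℝ)/2 + t)) / (q + 1) : ℝ) : ℂ) := by
  rw [gam_eq_one_sub_cos hq, rpow_half_sub_add_rpow_half_add hq,
    show Complex.I * t * log q = ((t * log q : ℝ) : ℂ) * Complex.I by push_cast; ring,
    Complex.cos_mul_I, ← Complex.ofReal_cosh]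
  push_cast
  rfl

lemma rpow_half_sub_add_rpow_half_add_le_iff {q : ℝ} (hq : 1 < q) {s t : ℝ} :
    q ^ ((1:ℝ)/2 - s) + q ^ ((1:ℝ)/2 + s) ≤ q ^ ((1:ℝ)/2 - t) + q ^ ((1:ℝ)/2 + t) ↔ |s| ≤ |t| := by
  have hq0 : 0 < q := by linarith
  have hL : 0 < log q := log_pos hq
  rw [rpow_half_sub_add_rpow_half_add hq0, rpow_half_sub_add_rpow_half_add hq0,
    mul_le_mul_iff_right₀ (by positivity), cosh_le_cosh, abs_mul, abs_mul,
    mul_le_mul_iff_left₀ (abs_pos.2 hL.ne')]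

lemma rpow_half_sub_add_rpow_half_add_inj {q : ℝ} (hq : 1 < q) {s t : ℝ} :
    q ^ ((1:ℝ)/2 - s) + q ^ ((1:ℝ)/2 + s) = q ^ ((1:ℝ)/2 - t) + q ^ ((1:ℝ)/2 + t) ↔ |s| = |t| := by
  simp only [le_antisymm_iff, rpow_half_sub_add_rpow_half_add_le_iff hq]

lemma one_sub_div_le_re_gam {q : ℝ} (hq : 1 < q) {z : ℂ} {δ : ℝ} (hz : |z.im| ≤ δ) :
    1 - (q ^ ((1:ℝ)/2 - δ) + q ^ ((1:ℝ)/2 + δ)) / (q + 1) ≤ (gam q z).re := by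
  have hq0 : 0 < q := by linarith
  have hS : q ^ ((1:ℝ)/2 - z.im) + q ^ ((1:ℝ)/2 + z.im) ≤ q ^ ((1:ℝ)/2 - δ) + q ^ ((1:ℝ)/2 + δ) :=
    (rpow_half_sub_add_rpow_half_add_le_iff hq).2 (hz.trans (le_abs_self δ))
  rw [re_gam hq0]
  gcongr
  calc 2 * √q * (cos (z.re * log q) * cosh (z.im * log q)) ≤ 2 * √q * cosh (z.im * log q) := by
        gcongr
        exact mul_le_of_le_one_left (cosh_pos _).le (cos_le_one _)
    _ = q ^ ((1:ℝ)/2 - z.im) + q ^ ((1:ℝ)/2 + z.im) := (rpow_half_sub_add_rpow_half_add hq0 _).symm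
    _ ≤ _ := hS

lemma one_sub_div_lt_re_gam {q : ℝ} (hq : 0 < q) {z : ℂ} (hz : cos (z.re * log q) < 1) :
    1 - (q ^ ((1:ℝ)/2 - z.im) + q ^ ((1:ℝ)/2 + z.im)) / (q + 1) < (gam q z).re := by
  rw [re_gam hq, rpow_half_sub_add_rpow_half_add hq]
  gcongr
  exact mul_lt_of_lt_one_left (cosh_pos _) hz

lemma cos_mul_log_lt_one {q : ℝ} (hq : 1 < q) {α : ℝ} (h₁ : -(tauq q) / 2 < α)
    (h₂ : α ≤ tauq q / 2) (h₀ : α ≠ 0) : cos (α * log q) < 1 := by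
  have hL : 0 < log q := log_pos hq
  have hτ : tauq q / 2 = π / log q := by rw [tauq]; ring
  rw [neg_div, hτ, ← neg_div, div_lt_iff₀ hL] at h₁
  rw [hτ, le_div_iff₀ hL] at h₂
  refine (cos_le_one _).lt_of_ne fun h => h₀ ?_
  have hzero := (cos_eq_one_iff_of_lt_of_lt (by linarith [pi_pos]) (by linarith [pi_pos])).1 h
  exact (mul_eq_zero.1 hzero).resolve_right hL.ne'

/-- For `δ ∈ (0,1/2]`, `γ(iδ)` equals the real number `1 - (q^{1/2-δ}+q^{1/2+δ})/(q+1)`,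
which is nonnegative, vanishing exactly when `δ = 1/2`; moreover `|γ(z)| ≥ γ(iδ)` on the
strip `|Im z| ≤ δ`, with strict inequality `|γ(α+iδ)| > γ(iδ)` for real
`α ∈ (-τ/2, τ/2]`, `α ≠ 0`. -/
theorem stmt7 (q : ℝ) (hq : 1 < q) (δ : ℝ) (hδ : δ ∈ Set.Ioc (0 : ℝ) (1/2)) :
    gam q (Complex.I * (δ : ℂ)) =
      ((1 - (q ^ ((1:ℝ)/2 - δ) + q ^ ((1:ℝ)/2 + δ)) / (q + 1) : ℝ) : ℂ) ∧
    0 ≤ 1 - (q ^ ((1:ℝ)/2 - δ) + q ^ ((1:ℝ)/2 + δ)) / (q + 1) ∧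
    (1 - (q ^ ((1:ℝ)/2 - δ) + q ^ ((1:ℝ)/2 + δ)) / (q + 1) = 0 ↔ δ = 1/2) ∧
    (∀ z : ℂ, |z.im| ≤ δ →
      1 - (q ^ ((1:ℝ)/2 - δ) + q ^ ((1:ℝ)/2 + δ)) / (q + 1) ≤ ‖gam q z‖) ∧
    ∀ α : ℝ, -(tauq q) / 2 < α → α ≤ tauq q / 2 → α ≠ 0 →
      1 - (q ^ ((1:ℝ)/2 - δ) + q ^ ((1:ℝ)/2 + δ)) / (q + 1) <
        ‖gam q ((α : ℂ) + Complex.I * (δ : ℂ))‖ := by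
  obtain ⟨hδ₀, hδ₁⟩ := hδ
  have hq0 : 0 < q := by linarith
  have hq1 : q + 1 ≠ 0 := by positivity
  have hS_half : q ^ ((1:ℝ)/2 - 1/2) + q ^ ((1:ℝ)/2 + 1/2) = q + 1 := by norm_num [add_comm]
  have habs : |δ| ≤ |1/2| ∧ (|δ| = |1/2| ↔ δ = 1/2) := by
    rw [abs_of_pos hδ₀, abs_of_pos one_half_pos]; exact ⟨hδ₁, Iff.rfl⟩
  refine ⟨gam_I_mul_ofReal hq0 δ, ?_, ?_, fun z hz => ?_, fun α h₁ h₂ h₀ => ?_⟩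
  · rw [sub_nonneg, div_le_one (by positivity), ← hS_half]
    exact (rpow_half_sub_add_rpow_half_add_le_iff hq).2 habs.1
  · rw [sub_eq_zero, eq_comm, div_eq_one_iff_eq hq1, ← hS_half,
      rpow_half_sub_add_rpow_half_add_inj hq, habs.2]
  · exact (one_sub_div_le_re_gam hq hz).trans (Complex.re_le_norm _)
  · have him : ((α : ℂ) + Complex.I * δ).im = δ := by simp
    have hlt := one_sub_div_lt_re_gam hq0 (z := α + Complex.I * δ)
      (by simpa using cos_mul_log_lt_one hq h₁ h₂ h₀)
    rw [him] at hlt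
    exact hlt.trans_le (Complex.re_le_norm _)
end

section
/- Fix an integer q ≥ 2, a real number p with 1 ≤ p < 2, its conjugate exponent p′ = p/(p−1) (with p′ = ∞ and 1/p′ = 0 when p = 1), and an integer m ≥ 2. Let X be a connected simple graph with no cycles in which every vertex has exactly q+1 neighbours, with graph distance d. Then there exists a constant C > 0, depending only on p, q and m, such that for all vertices o and x of X, the family (q^{(d(o,x) − d(o,y) − d(x,y))/p′} · q^{(1 − 2/p)·d(x,y)} · (1 + d(x,y))^{−m})_{y ∈ X} is summable and its sum is at most C. -/
/-!
Group the vertices `y` according to the vertex `z` where the geodesic from `x` to `y` leaves the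
geodesic from `x` to `o`. If `z` is at distance `j` from `x` and `k` from `y`, the summand equals
`q^{-2k/p′} q^{(1 - 2/p)(j + k)} (1 + j + k)^{-m}`, and at most `(q + 1) q^k` vertices share the
pair `(j, k)`. Since `q^k q^{-2k/p′} q^{(1 - 2/p)(j + k)} = q^{(1 - 2/p) j}`, the sum is at most
`(q + 1) ∑_{j,k} q^{(1 - 2/p) j} (1 + k)^{-2}`, which is finite because `p < 2` and `m ≥ 2`.
-/

open Finset

namespace SimpleGraph

variable {X : Type*} {G : SimpleGraph X}

theorem IsAcyclic.length_eq_dist (hG : G.IsAcyclic) {u v : X} {p : G.Walk u v} (hp : p.IsPath) :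
    p.length = G.dist u v := by
  obtain ⟨r, hr, hrlen⟩ := p.reachable.exists_path_of_dist
  obtain rfl : p = r :=
    congrArg Subtype.val ((hG.subsingleton_path u v).elim ⟨p, hp⟩ ⟨r, hr⟩)
  exact hrlen

theorem Walk.IsPath.append_of_forall_mem_support_eq {u v w : X} {p : G.Walk u v} {q : G.Walk v w}
    (hp : p.IsPath) (hq : q.IsPath) (h : ∀ a ∈ p.support, a ∈ q.support → a = v) :
    (p.append q).IsPath := by
  have hq' := hq.support_nodup
  rw [← q.cons_tail_support, List.nodup_cons] at hq'
  rw [Walk.isPath_def, Walk.support_append, List.nodup_append]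
  refine ⟨hp.support_nodup, hq'.2, fun a ha b hb hab => hq'.1 ?_⟩
  subst hab
  exact h a ha (q.cons_tail_support ▸ List.mem_cons_of_mem _ hb) ▸ hb

theorem Walk.dist_lt_of_length_eq_dist {u v w : X} {p : G.Walk u v}
    (hp : p.length = G.dist u v) (hw : w ∈ p.support) (hwu : w ≠ u) :
    G.dist w v < G.dist u v := by
  classical
  have hlen := congrArg Walk.length (p.take_spec hw)
  have htake : (p.takeUntil w hw).length ≠ 0 := fun h => hwu (Walk.eq_of_length_eq_zero h).symm
  rw [Walk.length_append] at hlen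
  have := dist_le (p.dropUntil w hw)
  omega

theorem IsAcyclic.exists_dist_getVert (hG : G.IsAcyclic) (hconn : G.Connected) {x o : X}
    {P : G.Walk x o} (hP : P.IsPath) (y : X) :
    ∃ j, G.dist x y = j + G.dist (P.getVert j) y ∧
      G.dist o y + j = G.dist x o + G.dist (P.getVert j) y := by
  classical
  -- The vertex `z` of `P` closest to `y` works: a geodesic `R` from `z` to `y` meets `P` only at
  -- `z`, so both halves of `P` followed by `R` are paths, hence geodesics.
  obtain ⟨z, hz, hzmin⟩ := P.support.toFinset.exists_min_image (G.dist · y) ⟨x, by simp⟩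
  rw [List.mem_toFinset] at hz
  obtain ⟨R, hR, hRlen⟩ := hconn.exists_path_of_dist z y
  have hmeet : ∀ w ∈ P.support, w ∈ R.support → w = z := fun w hwP hwR => by
    by_contra hwz
    exact (hzmin w (List.mem_toFinset.mpr hwP)).not_gt
      (Walk.dist_lt_of_length_eq_dist hRlen hwR hwz)
  have hx := hG.length_eq_dist <| (hP.takeUntil hz).append_of_forall_mem_support_eq hR
    fun w hw => hmeet w (P.support_takeUntil_subset_support hz hw)
  have ho := hG.length_eq_dist <| (hP.dropUntil hz).reverse.append_of_forall_mem_support_eq hR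
    fun w hw => hmeet w (P.support_dropUntil_subset_support hz (by simpa using hw))
  have hP := hG.length_eq_dist hP
  have hsplit := congrArg Walk.length (P.take_spec hz)
  simp only [Walk.length_append, Walk.length_reverse] at hx ho hsplit
  refine ⟨(P.takeUntil z hz).length, ?_, ?_⟩ <;> rw [P.getVert_length_takeUntil hz] <;> omega

theorem Connected.exists_adj_dist_add_one (hconn : G.Connected) (z : X) {y : X} (hy : y ≠ z) :
    ∃ w, G.Adj y w ∧ G.dist z w + 1 = G.dist z y := by
  obtain ⟨W, hW⟩ := hconn.exists_walk_length_eq_dist y z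
  have hnil : ¬W.Nil := Walk.not_nil_of_ne hy
  refine ⟨W.snd, W.adj_snd hnil, le_antisymm ?_ ?_⟩
  · have := dist_le W.tail
    have := W.length_tail_add_one hnil
    rw [dist_comm (u := z), dist_comm (u := z)]
    omega
  · have := hconn.dist_triangle (u := z) (v := W.snd) (w := y)
    rw [dist_comm (u := W.snd), dist_eq_one_iff_adj.mpr (W.adj_snd hnil)] at this
    exact this

variable {q : ℕ}

theorem Connected.card_le_of_forall_dist_eq_succ (hconn : G.Connected)
    (hdeg : ∀ v, (G.neighborSet v).ncard = q + 1) (z : X) (k : ℕ) (s : Finset X)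
    (hs : ∀ y ∈ s, G.dist z y = k + 1) : #s ≤ (q + 1) * q ^ k := by
  classical
  have hfin (v : X) : (G.neighborSet v).Finite := Set.finite_of_ncard_ne_zero (by simp [hdeg])
  choose! parent hadj hparent using fun y (hy : y ≠ z) => hconn.exists_adj_dist_add_one z hy
  induction k generalizing s with
  | zero =>
    have hsub : (s : Set X) ⊆ G.neighborSet z := fun y hy => dist_eq_one_iff_adj.mp (hs y hy)
    simpa [hdeg] using Set.ncard_le_ncard hsub (hfin z)
  | succ k ih =>
    have hne : ∀ y ∈ s, y ≠ z := fun y hy h => by simpa [h] using hs y hy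
    -- The vertices of `s` with parent `w` are neighbours of `w` other than the parent of `w`.
    have hfiber : ∀ w ∈ s.image parent, #{y ∈ s | parent y = w} ≤ q := by
      simp only [mem_image]
      rintro w ⟨y₀, hy₀, rfl⟩
      have hw : G.dist z (parent y₀) = k + 1 := by have := hparent y₀ (hne y₀ hy₀); grind
      have hwz : parent y₀ ≠ z := fun h => by simp [h] at hw
      have hsub : (({y ∈ s | parent y = parent y₀} : Finset X) : Set X) ⊆
          G.neighborSet (parent y₀) \ {parent (parent y₀)} := by
        intro y hy
        simp only [coe_filter, Set.mem_ofPred_eq] at hy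
        refine ⟨by simpa [← hy.2] using (hadj y (hne y hy.1)).symm, fun h => ?_⟩
        have := hparent _ hwz
        grind
      have := Set.ncard_le_ncard hsub ((hfin _).sdiff)
      rw [Set.ncard_sdiff_singleton_of_mem ((G.mem_neighborSet _ _).mpr (hadj _ hwz)), hdeg,
        Set.ncard_coe_finset] at this
      simpa using this
    calc #s ≤ q * #(s.image parent) := card_le_mul_card_image s q hfiber
      _ ≤ q * ((q + 1) * q ^ k) := by
        gcongr
        refine ih _ fun w hw => ?_
        obtain ⟨y, hy, rfl⟩ := mem_image.mp hw
        have := hparent y (hne y hy)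
        grind
      _ = (q + 1) * q ^ (k + 1) := by ring

theorem Connected.card_le_of_forall_dist_eq (hconn : G.Connected) (hq : q ≠ 0)
    (hdeg : ∀ v, (G.neighborSet v).ncard = q + 1) (z : X) (k : ℕ) (s : Finset X)
    (hs : ∀ y ∈ s, G.dist z y = k) : #s ≤ (q + 1) * q ^ k := by
  cases k with
  | zero =>
    have : s ⊆ {z} := fun y hy => by simp [(hconn.dist_eq_zero_iff.mp (hs y hy)).symm]
    simpa using (card_le_card this).trans (by simp : #({z} : Finset X) ≤ q + 1)
  | succ k =>
    calc #s ≤ (q + 1) * q ^ k := hconn.card_le_of_forall_dist_eq_succ hdeg z k s hs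
      _ ≤ (q + 1) * q ^ (k + 1) := by gcongr; omega; omega

end SimpleGraph

theorem summable_and_tsum_le_of_sum_fiber_le {α β : Type*} {f : α → ℝ} {g : β → ℝ}
    (hf : 0 ≤ f) (π : α → β) (hg : Summable g) (hg0 : 0 ≤ g)
    (hfib : ∀ b (t : Finset α), (∀ a ∈ t, π a = b) → ∑ a ∈ t, f a ≤ g b) :
    Summable f ∧ ∑' a, f a ≤ ∑' b, g b := by
  classical
  have key (u : Finset α) : ∑ a ∈ u, f a ≤ ∑' b, g b := calc
    ∑ a ∈ u, f a = ∑ b ∈ u.image π, ∑ a ∈ u with π a = b, f a :=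
      (sum_fiberwise_of_maps_to (fun a ha => mem_image_of_mem π ha) f).symm
    _ ≤ ∑ b ∈ u.image π, g b :=
      sum_le_sum fun b _ => hfib b _ fun a ha => (mem_filter.mp ha).2
    _ ≤ ∑' b, g b := hg.sum_le_tsum _ fun b _ => hg0 b
  exact ⟨summable_of_sum_le hf key, Real.tsum_le_of_sum_le hf key⟩

theorem summable_pow_mul_inv_one_add_sq {s : ℝ} (hs0 : 0 ≤ s) (hs1 : s < 1) :
    Summable fun jk : ℕ × ℕ => s ^ jk.1 * ((1 + jk.2 : ℝ) ^ 2)⁻¹ := by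
  have hsq : Summable fun k : ℕ => ((1 + k : ℝ) ^ 2)⁻¹ := by
    simpa [add_comm] using (summable_nat_add_iff 1).mpr (Real.summable_nat_pow_inv.mpr one_lt_two)
  exact (summable_geometric_of_lt_one hs0 hs1).mul_of_nonneg hsq (fun _ => by positivity)
    fun _ => by positivity

theorem mul_rpow_mul_rpow_div_pow_le {q p N : ℝ} (hq : 0 < q) {m : ℕ} (hm : 2 ≤ m) (j k : ℕ)
    (hN : N ≤ (q + 1) * q ^ k) :
    N * (q ^ (-(2 * k : ℝ) * (1 - 1 / p)) * q ^ ((1 - 2 / p) * (j + k : ℝ)) /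
        (1 + (j + k : ℝ)) ^ m) ≤
      (q + 1) * ((q ^ (1 - 2 / p)) ^ j * ((1 + k : ℝ) ^ 2)⁻¹) := by
  have hpow : q ^ k * (q ^ (-(2 * k : ℝ) * (1 - 1 / p)) * q ^ ((1 - 2 / p) * (j + k : ℝ))) =
      (q ^ (1 - 2 / p)) ^ j := by
    rw [← Real.rpow_natCast, ← Real.rpow_natCast (q ^ _), ← Real.rpow_mul hq.le,
      ← Real.rpow_add hq, ← Real.rpow_add hq]
    ring_nf
  have hj : (0 : ℝ) ≤ j := j.cast_nonneg
  have hden : (1 + k : ℝ) ^ 2 ≤ (1 + (j + k : ℝ)) ^ m := calc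
    (1 + k : ℝ) ^ 2 ≤ (1 + (j + k : ℝ)) ^ 2 := by gcongr; linarith
    _ ≤ (1 + (j + k : ℝ)) ^ m :=
      pow_le_pow_right₀ (by linarith [k.cast_nonneg (α := ℝ)]) hm
  calc _ ≤ (q + 1) * q ^ k * (q ^ (-(2 * k : ℝ) * (1 - 1 / p)) *
        q ^ ((1 - 2 / p) * (j + k : ℝ)) / (1 + (j + k : ℝ)) ^ m) := by gcongr
    _ = (q + 1) * ((q ^ (1 - 2 / p)) ^ j / (1 + (j + k : ℝ)) ^ m) := by rw [← hpow]; ring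
    _ ≤ _ := by rw [← div_eq_mul_inv]; gcongr

/-- Uniform sum estimate on a homogeneous tree of degree `q+1`, Hardy-type case: for
`1 ≤ p < 2` with conjugate exponent `p′` (so `1/p′ = 1 - 1/p`, which is `0` when `p = 1`)
and `m ≥ 2`, there is `C > 0` (depending only on `p`, `q`, `m`) such that for all
vertices `o`, `x`,
`∑_y q^{(d(o,x) - d(o,y) - d(x,y))/p′} · q^{(1 - 2/p)·d(x,y)} · (1 + d(x,y))^{-m} ≤ C`,
the family being summable. -/
theorem stmt17 (q : ℕ) (hq : 2 ≤ q) (p : ℝ) (hp1 : 1 ≤ p) (hp2 : p < 2)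
    (m : ℕ) (hm : 2 ≤ m)
    (X : Type*) (G : SimpleGraph X) (hconn : G.Connected) (hacyc : G.IsAcyclic)
    (hdeg : ∀ v : X, (G.neighborSet v).ncard = q + 1) :
    ∃ C : ℝ, 0 < C ∧ ∀ o x : X,
      Summable (fun y : X =>
        (q : ℝ) ^ (((G.dist o x : ℝ) - (G.dist o y : ℝ) - (G.dist x y : ℝ)) * (1 - 1 / p)) *
          (q : ℝ) ^ ((1 - 2 / p) * (G.dist x y : ℝ)) / (1 + (G.dist x y : ℝ)) ^ m) ∧
      ∑' y : X,
        (q : ℝ) ^ (((G.dist o x : ℝ) - (G.dist o y : ℝ) - (G.dist x y : ℝ)) * (1 - 1 / p)) *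
          (q : ℝ) ^ ((1 - 2 / p) * (G.dist x y : ℝ)) / (1 + (G.dist x y : ℝ)) ^ m ≤ C := by
  have hq0 : (0 : ℝ) < q := by positivity
  have hs1 : (q : ℝ) ^ (1 - 2 / p) < 1 := Real.rpow_lt_one_of_one_lt_of_neg
    (by exact_mod_cast hq) (by linarith [(one_lt_div (by linarith : 0 < p)).mpr hp2])
  set g : ℕ × ℕ → ℝ :=
    fun jk => (q + 1) * (((q : ℝ) ^ (1 - 2 / p)) ^ jk.1 * ((1 + jk.2 : ℝ) ^ 2)⁻¹)
  have hg : Summable g := (summable_pow_mul_inv_one_add_sq (by positivity) hs1).mul_left _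
  refine ⟨∑' jk, g jk, hg.tsum_pos (fun _ => by positivity) (0, 0) (by simp [g]; positivity),
    fun o x => ?_⟩
  obtain ⟨P, hP, -⟩ := hconn.exists_path_of_dist x o
  choose j hj using hacyc.exists_dist_getVert hconn hP
  refine summable_and_tsum_le_of_sum_fiber_le (fun _ => by positivity)
    (fun y => (j y, G.dist (P.getVert (j y)) y)) hg (fun _ => by positivity) ?_
  rintro ⟨j₀, k⟩ t ht
  simp only [Prod.mk.injEq] at ht
  have hcard := hconn.card_le_of_forall_dist_eq (by omega) hdeg (P.getVert j₀) k t
    fun y hy => (ht y hy).1 ▸ (ht y hy).2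
  rw [sum_congr rfl fun y hy => ?_, sum_const, nsmul_eq_mul]
  · exact mul_rpow_mul_rpow_div_pow_le hq0 hm j₀ k (by exact_mod_cast hcard)
  obtain ⟨rfl, hk⟩ := ht y hy
  obtain ⟨hxy, hoy⟩ := hj y
  rw [hk] at hxy hoy
  have hexp : (G.dist o x : ℝ) - G.dist o y - G.dist x y = -(2 * k) := by
    have : (G.dist o y : ℝ) + j y = G.dist x o + k := by exact_mod_cast hoy
    rw [SimpleGraph.dist_comm, hxy]; push_cast; linarith
  rw [hexp, hxy]
  push_cast
  ring_nf
end
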